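/- arXiv:2212.03026 — 2 statements merged into one kernel-verified Lean document; each statement's English description precedes it below -/
import Mathlib

section
/- For any even integer t ≥ 6 and any integer β ≥ 7, the polynomial R_t(x) is not divisible in ℚ[x] by any polynomial V(x) ∈ ℚ[x] that has at least two nonzero terms and such that every exponent occurring with nonzero coefficient in V is divisible by β. -/
open Polynomial
/-- `R_t(x) = 2x^{2t+1} − 2x^{2t−1} + 2x^{2t−2} − x^{t+3} + x^{t+2} − 4x^{t+1} + 4x^t − x^{t−1}
+ x^{t−2} − 2x^3 + 2x^2 − 2`. -/
noncomputable def Rpoly (t : ℕ) : Polynomial ℚ :=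
  C 2 * X ^ (2 * t + 1) - C 2 * X ^ (2 * t - 1) + C 2 * X ^ (2 * t - 2) - X ^ (t + 3)
    + X ^ (t + 2) - C 4 * X ^ (t + 1) + C 4 * X ^ t - X ^ (t - 1) + X ^ (t - 2)
    - C 2 * X ^ 3 + C 2 * X ^ 2 - C 2

/-!
If all exponents of `V` are divisible by `β`, multiplication by `V` preserves the residue
classes of exponents mod `β`, so `V ∣ P` implies that `V` divides the part of `P` supported on
any one class. A polynomial with at least two terms divides no nonzero monomial (its degree and
trailing degree would have to agree).

For `t ≥ 6` and `β ≥ 7` the twelve exponents of `R_t` are `2t + c`, `t + c` or `c` with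
`|c| ≤ 3`, so the residue of `t` mod `β` decides which of them are congruent. If `β ∣ t`,
the classes of `0` and `2` give `V ∣ 4x^t - 2` and `V ∣ x^{t+2} + 2x^2`, hence `V ∣ 10x^2`.
Otherwise one of `t + 3`, `t - 1`, `t - 2`, `t` is alone in its class, and `V` divides a
monomial.
-/

namespace Polynomial

variable {R : Type*} [Semiring R]

noncomputable def residuePart (n : ℕ) (r : ZMod n) (p : R[X]) : R[X] :=
  ∑ k ∈ p.support.filter (fun k : ℕ => (k : ZMod n) = r), monomial k (p.coeff k)

theorem coeff_residuePart (n : ℕ) (r : ZMod n) (p : R[X]) (k : ℕ) :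
    (residuePart n r p).coeff k = if (k : ZMod n) = r then p.coeff k else 0 := by
  by_cases hk : (k : ZMod n) = r <;> by_cases hp : p.coeff k = 0 <;>
    simp [residuePart, finsetSum_coeff, coeff_monomial, hk, hp]

theorem residuePart_mul_left {n : ℕ} {V : R[X]} (hV : ∀ k ∈ V.support, n ∣ k) (r : ZMod n)
    (q : R[X]) : residuePart n r (V * q) = V * residuePart n r q := by
  ext k
  have hterm : ∀ x ∈ Finset.HasAntidiagonal.antidiagonal k,
      V.coeff x.1 * (if (x.2 : ZMod n) = r then q.coeff x.2 else 0) =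
        if (k : ZMod n) = r then V.coeff x.1 * q.coeff x.2 else 0 := by
    rintro ⟨i, j⟩ hij
    rcases eq_or_ne (V.coeff i) 0 with hi | hi
    · simp [hi]
    · have hi' : (i : ZMod n) = 0 :=
        (ZMod.natCast_eq_zero_iff i n).mpr (hV i (mem_support_iff.mpr hi))
      have hk : (k : ZMod n) = j := by
        rw [← Finset.HasAntidiagonal.mem_antidiagonal.mp hij, Nat.cast_add, hi', zero_add]
      simp [hk, mul_ite]
  simp only [coeff_residuePart, coeff_mul]
  rw [Finset.sum_congr rfl hterm, Finset.sum_ite_irrel, Finset.sum_const_zero]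

theorem dvd_residuePart {n : ℕ} {V p : R[X]} (hV : ∀ k ∈ V.support, n ∣ k) (h : V ∣ p)
    (r : ZMod n) : V ∣ residuePart n r p := by
  obtain ⟨q, rfl⟩ := h
  exact ⟨_, residuePart_mul_left hV r q⟩

theorem residuePart_eq_sum {n : ℕ} {r : ZMod n} {p : R[X]} {S : Finset ℕ}
    (hpS : ∀ k ∈ p.support, (k : ZMod n) = r → k ∈ S) (hS : ∀ k ∈ S, (k : ZMod n) = r) :
    residuePart n r p = ∑ k ∈ S, monomial k (p.coeff k) := by
  refine Finset.sum_subset (fun k hk => ?_) (fun k hkS hk => ?_)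
  · rw [Finset.mem_filter] at hk
    exact hpS k hk.1 hk.2
  · have : k ∉ p.support := fun hkp => hk (Finset.mem_filter.mpr ⟨hkp, hS k hkS⟩)
    rw [notMem_support_iff.mp this, monomial_zero_right]

theorem dvd_sum_monomial_of_residue_class {n : ℕ} {V p : R[X]} (hV : ∀ k ∈ V.support, n ∣ k)
    (h : V ∣ p) {r : ZMod n} {S : Finset ℕ} (hS : ∀ k ∈ S, (k : ZMod n) = r)
    (hpS : ∀ k ∈ p.support, (k : ZMod n) = r → k ∈ S) :
    V ∣ ∑ k ∈ S, monomial k (p.coeff k) :=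
  residuePart_eq_sum hpS hS ▸ dvd_residuePart hV h r

theorem card_support_le_one_of_dvd_monomial [NoZeroDivisors R] {V : R[X]} {k : ℕ} {a : R}
    (ha : a ≠ 0) (h : V ∣ monomial k a) : V.support.card ≤ 1 := by
  obtain ⟨q, hq⟩ := h
  have hV : V ≠ 0 := by rintro rfl; simp [ha] at hq
  have hq0 : q ≠ 0 := by rintro rfl; simp [ha] at hq
  have hdeg := natDegree_mul hV hq0
  have htrail := natTrailingDegree_mul hV hq0
  rw [← hq, natDegree_monomial_eq k ha] at hdeg
  rw [← hq, natTrailingDegree_monomial ha] at htrail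
  have := V.natTrailingDegree_le_natDegree
  have := q.natTrailingDegree_le_natDegree
  refine Finset.card_le_one.mpr fun i hi j hj => ?_
  have := le_natDegree_of_mem_supp i hi
  have := le_natDegree_of_mem_supp j hj
  have := natTrailingDegree_le_of_mem_supp i hi
  have := natTrailingDegree_le_of_mem_supp j hj
  omega

end Polynomial

theorem ZMod.natCast_ne_zero_of_lt {n k : ℕ} (hk : k ≠ 0) (hkn : k < n) : (k : ZMod n) ≠ 0 :=
  fun h => absurd (Nat.le_of_dvd (Nat.pos_of_ne_zero hk) ((ZMod.natCast_eq_zero_iff k n).mp h))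
    (by omega)

theorem ZMod.one_to_six_ne_zero {n : ℕ} (hn : 7 ≤ n) :
    (1 : ZMod n) ≠ 0 ∧ (2 : ZMod n) ≠ 0 ∧ (3 : ZMod n) ≠ 0 ∧ (4 : ZMod n) ≠ 0 ∧
      (5 : ZMod n) ≠ 0 ∧ (6 : ZMod n) ≠ 0 := by
  have h (k : ℕ) (hk : k ≠ 0) (hk6 : k ≤ 6) : (k : ZMod n) ≠ 0 :=
    ZMod.natCast_ne_zero_of_lt hk (by omega)
  exact ⟨by exact_mod_cast h 1 (by norm_num) (by norm_num),
    by exact_mod_cast h 2 (by norm_num) (by norm_num),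
    by exact_mod_cast h 3 (by norm_num) (by norm_num),
    by exact_mod_cast h 4 (by norm_num) (by norm_num),
    by exact_mod_cast h 5 (by norm_num) (by norm_num),
    by exact_mod_cast h 6 (by norm_num) (by norm_num)⟩

def Rexponents (t : ℕ) : Finset ℕ :=
  {2 * t + 1, 2 * t - 1, 2 * t - 2, t + 3, t + 2, t + 1, t, t - 1, t - 2, 3, 2, 0}

theorem support_Rpoly_subset (t : ℕ) : (Rpoly t).support ⊆ Rexponents t := by
  intro k hk
  contrapose! hk
  simp only [Rexponents, Finset.mem_insert, Finset.mem_singleton, not_or] at hk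
  simp [Rpoly, coeff_X_pow, coeff_C, hk]

theorem coeff_Rpoly {t : ℕ} (ht : 6 ≤ t) :
    (Rpoly t).coeff (t + 3) = -1 ∧ (Rpoly t).coeff (t + 2) = 1 ∧ (Rpoly t).coeff t = 4 ∧
      (Rpoly t).coeff (t - 1) = -1 ∧ (Rpoly t).coeff (t - 2) = 1 ∧ (Rpoly t).coeff 2 = 2 ∧
      (Rpoly t).coeff 0 = -2 := by
  refine ⟨?_, ?_, ?_, ?_, ?_, ?_, ?_⟩ <;>
    simp (disch := omega) [Rpoly, coeff_X_pow, coeff_C, if_neg]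

theorem cast_Rexponents_sub {A : Type*} [Ring A] {t : ℕ} (ht : 2 ≤ t) :
    ((t - 1 : ℕ) : A) = t - 1 ∧ ((t - 2 : ℕ) : A) = t - 2 ∧
      ((2 * t - 1 : ℕ) : A) = 2 * t - 1 ∧ ((2 * t - 2 : ℕ) : A) = 2 * t - 2 := by
  push_cast [Nat.cast_sub (by omega : 1 ≤ t), Nat.cast_sub ht, Nat.cast_sub (by omega : 1 ≤ 2 * t),
    Nat.cast_sub (by omega : 2 ≤ 2 * t)]
  exact ⟨rfl, rfl, rfl, rfl⟩

theorem dvd_monomial_of_dvd_Rpoly_of_cast_eq_zero {β t : ℕ} (hβ : 7 ≤ β) (ht : 6 ≤ t)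
    (hτ : (t : ZMod β) = 0) {V : ℚ[X]} (hV : ∀ k ∈ V.support, β ∣ k) (h : V ∣ Rpoly t) :
    V ∣ monomial 2 (10 : ℚ) := by
  have hsmall := ZMod.one_to_six_ne_zero hβ
  obtain ⟨c1, c2, c3, c4⟩ := cast_Rexponents_sub (A := ZMod β) (by omega : 2 ≤ t)
  have hclass (r : ZMod β) (S : Finset ℕ) (hS : ∀ k ∈ S, (k : ZMod β) = r)
      (hRS : ∀ k ∈ Rexponents t, (k : ZMod β) = r → k ∈ S) :
      V ∣ ∑ k ∈ S, monomial k ((Rpoly t).coeff k) :=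
    dvd_sum_monomial_of_residue_class hV h hS fun k hk => hRS k (support_Rpoly_subset t hk)
  have d0 := hclass 0 {t, 0} (by simp [hτ]) ?_
  have d2 := hclass 2 {t + 2, 2} (by simp [hτ]) ?_
  · rw [Finset.sum_pair (by omega)] at d0 d2
    obtain ⟨-, e2, e0, -, -, e2', e0'⟩ := coeff_Rpoly ht
    rw [e2, e2'] at d2
    rw [e0, e0'] at d0
    have e : monomial 2 (10 : ℚ) = C 4 * (monomial (t + 2) 1 + monomial 2 2) -
        X ^ 2 * (monomial t 4 + monomial 0 (-2)) := by
      simp only [← C_mul_X_pow_eq_monomial, map_neg, map_one, map_ofNat]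
      ring
    rw [e]
    exact dvd_sub (dvd_mul_of_dvd_right d2 _) (dvd_mul_of_dvd_right d0 _)
  -- Each goal left asserts that two exponents are congruent mod `β`; after subtracting, this is
  -- `c = 0` in `ZMod β` with `1 ≤ |c| ≤ 6`, or it contradicts the hypothesis on `t mod β`.
  all_goals
    simp only [Rexponents, Finset.mem_insert, Finset.mem_singleton, forall_eq_or_imp, forall_eq,
      c1, c2, c3, c4, Nat.cast_add, Nat.cast_mul, Nat.cast_ofNat, Nat.cast_zero, hτ, true_or,
      or_true, implies_true, and_true, true_and]
    and_intros <;> intro hk <;> rw [← sub_eq_zero] at hk <;> norm_num at hk <;> grind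

theorem exists_isolated_exponent_Rpoly {β t : ℕ} (hβ : 7 ≤ β) (ht : 6 ≤ t)
    (hτ : (t : ZMod β) ≠ 0) :
    ∃ m, (Rpoly t).coeff m ≠ 0 ∧ ∀ k ∈ Rexponents t, (k : ZMod β) = m → k = m := by
  have hsmall := ZMod.one_to_six_ne_zero hβ
  obtain ⟨c1, c2, c3, c4⟩ := cast_Rexponents_sub (A := ZMod β) (by omega : 2 ≤ t)
  obtain ⟨e3, -, e0, e1, e2, -, -⟩ := coeff_Rpoly ht
  refine if h1 : (t : ZMod β) = 1 then ⟨t + 3, by simp [e3], ?_⟩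
    else if h2 : (t : ZMod β) = 2 ∨ (t : ZMod β) = -1 then ⟨t - 1, by simp [e1], ?_⟩
    else if h3 : (t : ZMod β) = 3 then ⟨t - 2, by simp [e2], ?_⟩
    else ⟨t, by simp [e0], ?_⟩
  all_goals
    simp only [Rexponents, Finset.mem_insert, Finset.mem_singleton, forall_eq_or_imp, forall_eq,
      c1, c2, c3, c4, Nat.cast_add, Nat.cast_mul, Nat.cast_ofNat, Nat.cast_zero, imp_self,
      true_and]
    and_intros <;> intro hk <;> rw [← sub_eq_zero] at hk <;> norm_num at hk <;> grind

theorem Rpoly_not_dvd_by_beta_lacunary_general (t : ℕ) (ht : 6 ≤ t) (β : ℕ)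
    (hβ : 7 ≤ β) (V : Polynomial ℚ) (hV : 2 ≤ V.support.card)
    (hexp : ∀ k ∈ V.support, β ∣ k) :
    ¬ V ∣ Rpoly t := by
  intro hdvd
  have hmonomial (k : ℕ) (a : ℚ) (ha : a ≠ 0) : ¬ V ∣ monomial k a := fun h =>
    absurd (card_support_le_one_of_dvd_monomial ha h) (by omega)
  by_cases hτ : (t : ZMod β) = 0
  · exact hmonomial 2 10 (by norm_num)
      (dvd_monomial_of_dvd_Rpoly_of_cast_eq_zero hβ ht hτ hexp hdvd)
  · obtain ⟨m, hm, hiso⟩ := exists_isolated_exponent_Rpoly hβ ht hτ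
    have hdvd_m := dvd_sum_monomial_of_residue_class hexp hdvd (S := {m}) (r := m) (by simp)
      fun k hk hkm => Finset.mem_singleton.mpr (hiso k (support_Rpoly_subset t hk) hkm)
    rw [Finset.sum_singleton] at hdvd_m
    exact hmonomial m _ hm hdvd_m

/-- For even `t ≥ 6` and `β ≥ 7`, `R_t` is not divisible by any rational polynomial with at
least two nonzero terms all of whose exponents are divisible by `β`. -/
theorem Rpoly_not_dvd_by_beta_lacunary (t : ℕ) (ht : 6 ≤ t) (hte : Even t) (β : ℕ)
    (hβ : 7 ≤ β) (V : Polynomial ℚ) (hV : 2 ≤ V.support.card)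
    (hexp : ∀ k ∈ V.support, β ∣ k) :
    ¬ V ∣ Rpoly t :=
  Rpoly_not_dvd_by_beta_lacunary_general t ht β hβ V hV hexp
end

section
/- For each even integer t ≥ 6, the polynomial Q_t(x) is not divisible by any cyclotomic polynomial Φ_b(x) with b ≥ 3; equivalently, no root of unity of order at least 3 is a root of Q_t. -/
open Polynomial

/-- `Q_t(x) = 2x^{2t+1} − 2x^{2t−1} + 2x^{2t−2} + x^{t+3} − x^{t+2} + x^{t−1} − x^{t−2}
− 2x^3 + 2x^2 − 2`. -/
noncomputable def Qpoly (t : ℕ) : Polynomial ℚ :=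
  C 2 * X ^ (2 * t + 1) - C 2 * X ^ (2 * t - 1) + C 2 * X ^ (2 * t - 2) + X ^ (t + 3)
    - X ^ (t + 2) + X ^ (t - 1) - X ^ (t - 2) - C 2 * X ^ 3 + C 2 * X ^ 2 - C 2

lemma Qpoly_eq (u : ℕ) : Qpoly (2*u+6) =
    2 * X ^ (4*u+13) - 2 * X ^ (4*u+11) + 2 * X ^ (4*u+10) + X ^ (2*u+9)
    - X ^ (2*u+8) + X ^ (2*u+5) - X ^ (2*u+4) - 2 * X ^ 3 + 2 * X ^ 2 - 2 := by
  simp only [Qpoly]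
  rw [show 2*(2*u+6)+1 = 4*u+13 by ring, show 2*(2*u+6)-1 = 4*u+11 by omega,
    show 2*(2*u+6)-2 = 4*u+10 by omega, show 2*u+6+3 = 2*u+9 by ring,
    show 2*u+6+2 = 2*u+8 by ring, show 2*u+6-1 = 2*u+5 by omega,
    show 2*u+6-2 = 2*u+4 by omega]
  simp only [map_ofNat]

lemma key_dvd (d : ℚ[X]) (e : ℕ) (h : d ∣ (X ^ e - 1 : ℚ[X])) (k a : ℕ) :
    d ∣ X ^ (e * k + a) - X ^ a := by
  have h2 : X ^ (e * k + a) - X ^ a = X ^ a * ((X ^ e) ^ k - (1:ℚ[X]) ^ k) := by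
    rw [← pow_mul]; ring
  rw [h2]
  exact Dvd.dvd.mul_left (h.trans (sub_dvd_pow_sub_pow _ _ k)) _

lemma key4 (k a : ℕ) : (X ^ 2 + 1 : ℚ[X]) ∣ X ^ (4 * k + a) - X ^ a :=
  key_dvd _ 4 ⟨X ^ 2 - 1, by ring⟩ k a

lemma key8 (k a : ℕ) : (X ^ 4 + 1 : ℚ[X]) ∣ X ^ (8 * k + a) - X ^ a :=
  key_dvd _ 8 ⟨X ^ 4 - 1, by ring⟩ k a

lemma deg_contra2 {R : ℚ[X]} (h : (X^2+1 : ℚ[X]) ∣ R)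
    (hdeg : R.degree ≤ 1) (hne : R ≠ 0) : False := by
  have h2 : ((X:ℚ[X])^2+1).degree = 2 := by
    rw [show ((X:ℚ[X])^2+1) = X^2 + C 1 by norm_num]
    exact degree_X_pow_add_C (by norm_num) 1
  exact hne (eq_zero_of_dvd_of_degree_lt h (by rw [h2]; exact lt_of_le_of_lt hdeg (by norm_num)))

lemma deg_contra4 {R : ℚ[X]} (h : (X^4+1 : ℚ[X]) ∣ R)
    (hdeg : R.degree ≤ 3) (hne : R ≠ 0) : False := by
  have h2 : ((X:ℚ[X])^4+1).degree = 4 := by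
    rw [show ((X:ℚ[X])^4+1) = X^4 + C 1 by norm_num]
    exact degree_X_pow_add_C (by norm_num) 1
  exact hne (eq_zero_of_dvd_of_degree_lt h (by rw [h2]; exact lt_of_le_of_lt hdeg (by norm_num)))

lemma not_dvd_four (u : ℕ) : ¬ (X^2+1 : ℚ[X]) ∣ Qpoly (2*u+6) := by
  intro hd
  rw [Qpoly_eq] at hd
  obtain ⟨g, hg⟩ := hd
  obtain ⟨v, hv⟩ : ∃ v, u = 2*v ∨ u = 2*v+1 := ⟨u/2, by omega⟩
  rcases hv with rfl | rfl
  · -- t = 4v+6, remainder 8X - 8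
    obtain ⟨c1, h1⟩ := key4 (2*v+3) 1
    obtain ⟨c2, h2⟩ := key4 (2*v+2) 3
    obtain ⟨c3, h3⟩ := key4 (2*v+2) 2
    obtain ⟨c4, h4⟩ := key4 (v+2) 1
    obtain ⟨c5, h5⟩ := key4 (v+2) 0
    obtain ⟨c6, h6⟩ := key4 (v+1) 1
    obtain ⟨c7, h7⟩ := key4 (v+1) 0
    have hrem : (X^2+1 : ℚ[X]) ∣ 8*X - 8 :=
      ⟨g - (2*c1 - 2*c2 + 2*c3 + c4 - c5 + c6 - c7 + (4 - 4*X)), by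
        linear_combination hg - 2*h1 + 2*h2 - 2*h3 - h4 + h5 - h6 + h7⟩
    refine deg_contra2 hrem ?_ ?_
    · compute_degree!
    · intro he
      have h0 := congrArg (Polynomial.eval 0) he
      simp at h0
  · -- t = 4v+8, remainder 4X - 4
    obtain ⟨c1, h1⟩ := key4 (2*v+4) 1
    obtain ⟨c2, h2⟩ := key4 (2*v+3) 3
    obtain ⟨c3, h3⟩ := key4 (2*v+3) 2
    obtain ⟨c4, h4⟩ := key4 (v+2) 3
    obtain ⟨c5, h5⟩ := key4 (v+2) 2
    obtain ⟨c6, h6⟩ := key4 (v+1) 3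
    obtain ⟨c7, h7⟩ := key4 (v+1) 2
    have hrem : (X^2+1 : ℚ[X]) ∣ 4*X - 4 :=
      ⟨g - (2*c1 - 2*c2 + 2*c3 + c4 - c5 + c6 - c7 + (2 - 2*X)), by
        linear_combination hg - 2*h1 + 2*h2 - 2*h3 - h4 + h5 - h6 + h7⟩
    refine deg_contra2 hrem ?_ ?_
    · compute_degree!
    · intro he
      have h0 := congrArg (Polynomial.eval 0) he
      simp at h0

lemma not_dvd_eight (u : ℕ) : ¬ (X^4+1 : ℚ[X]) ∣ Qpoly (2*u+6) := by
  intro hd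
  rw [Qpoly_eq] at hd
  obtain ⟨g, hg⟩ := hd
  obtain ⟨w, hw⟩ : ∃ w, u = 4*w ∨ u = 4*w+1 ∨ u = 4*w+2 ∨ u = 4*w+3 := ⟨u/4, by omega⟩
  rcases hw with rfl | rfl | rfl | rfl
  · -- t = 8w+6: exps 16w+13,16w+11,16w+10, 8w+9,8w+8,8w+5,8w+4; rem -4X^3+4X^2-2X-2
    obtain ⟨c1, h1⟩ := key8 (2*w+1) 5
    obtain ⟨c2, h2⟩ := key8 (2*w+1) 3
    obtain ⟨c3, h3⟩ := key8 (2*w+1) 2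
    obtain ⟨c4, h4⟩ := key8 (w+1) 1
    obtain ⟨c5, h5⟩ := key8 (w+1) 0
    obtain ⟨c6, h6⟩ := key8 w 5
    obtain ⟨c7, h7⟩ := key8 w 4
    have hrem : (X^4+1 : ℚ[X]) ∣ -4*X^3 + 4*X^2 - 2*X - 2 :=
      ⟨g - (2*c1 - 2*c2 + 2*c3 + c4 - c5 + c6 - c7 + (3*X - 1)), by
        linear_combination hg - 2*h1 + 2*h2 - 2*h3 - h4 + h5 - h6 + h7⟩
    refine deg_contra4 hrem ?_ ?_
    · compute_degree!
    · intro he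
      have h0 := congrArg (Polynomial.eval 0) he
      simp at h0
  · -- t = 8w+8: exps 16w+17,16w+15,16w+14, 8w+11,8w+10,8w+7,8w+6; rem 2X-2
    obtain ⟨c1, h1⟩ := key8 (2*w+2) 1
    obtain ⟨c2, h2⟩ := key8 (2*w+1) 7
    obtain ⟨c3, h3⟩ := key8 (2*w+1) 6
    obtain ⟨c4, h4⟩ := key8 (w+1) 3
    obtain ⟨c5, h5⟩ := key8 (w+1) 2
    obtain ⟨c6, h6⟩ := key8 w 7
    obtain ⟨c7, h7⟩ := key8 w 6
    have hrem : (X^4+1 : ℚ[X]) ∣ 2*X - 2 :=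
      ⟨g - (2*c1 - 2*c2 + 2*c3 + c4 - c5 + c6 - c7 + (-X^3 + X^2)), by
        linear_combination hg - 2*h1 + 2*h2 - 2*h3 - h4 + h5 - h6 + h7⟩
    refine deg_contra4 hrem ?_ ?_
    · compute_degree!
    · intro he
      have h0 := congrArg (Polynomial.eval 0) he
      simp at h0
  · -- t = 8w+10: exps 16w+21,16w+19,16w+18, 8w+13,8w+12,8w+9,8w+8; rem -4X^3+4X^2-2X-2
    obtain ⟨c1, h1⟩ := key8 (2*w+2) 5
    obtain ⟨c2, h2⟩ := key8 (2*w+2) 3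
    obtain ⟨c3, h3⟩ := key8 (2*w+2) 2
    obtain ⟨c4, h4⟩ := key8 (w+1) 5
    obtain ⟨c5, h5⟩ := key8 (w+1) 4
    obtain ⟨c6, h6⟩ := key8 (w+1) 1
    obtain ⟨c7, h7⟩ := key8 (w+1) 0
    have hrem : (X^4+1 : ℚ[X]) ∣ -4*X^3 + 4*X^2 - 2*X - 2 :=
      ⟨g - (2*c1 - 2*c2 + 2*c3 + c4 - c5 + c6 - c7 + (3*X - 1)), by
        linear_combination hg - 2*h1 + 2*h2 - 2*h3 - h4 + h5 - h6 + h7⟩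
    refine deg_contra4 hrem ?_ ?_
    · compute_degree!
    · intro he
      have h0 := congrArg (Polynomial.eval 0) he
      simp at h0
  · -- t = 8w+12: exps 16w+25,16w+23,16w+22, 8w+15,8w+14,8w+11,8w+10; rem 2X-2
    obtain ⟨c1, h1⟩ := key8 (2*w+3) 1
    obtain ⟨c2, h2⟩ := key8 (2*w+2) 7
    obtain ⟨c3, h3⟩ := key8 (2*w+2) 6
    obtain ⟨c4, h4⟩ := key8 (w+1) 7
    obtain ⟨c5, h5⟩ := key8 (w+1) 6
    obtain ⟨c6, h6⟩ := key8 (w+1) 3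
    obtain ⟨c7, h7⟩ := key8 (w+1) 2
    have hrem : (X^4+1 : ℚ[X]) ∣ 2*X - 2 :=
      ⟨g - (2*c1 - 2*c2 + 2*c3 + c4 - c5 + c6 - c7 + (-X^3 + X^2)), by
        linear_combination hg - 2*h1 + 2*h2 - 2*h3 - h4 + h5 - h6 + h7⟩
    refine deg_contra4 hrem ?_ ?_
    · compute_degree!
    · intro he
      have h0 := congrArg (Polynomial.eval 0) he
      simp at h0

noncomputable def QZ (u : ℕ) : Polynomial ℤ :=
  C 2 * X ^ (4*u+13) - C 2 * X ^ (4*u+11) + C 2 * X ^ (4*u+10) + X ^ (2*u+9)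
    - X ^ (2*u+8) + X ^ (2*u+5) - X ^ (2*u+4) - C 2 * X ^ 3 + C 2 * X ^ 2 - C 2

lemma QZ_map_rat (u : ℕ) : (QZ u).map (Int.castRingHom ℚ) = Qpoly (2*u+6) := by
  rw [Qpoly_eq]
  simp only [QZ, Polynomial.map_sub, Polynomial.map_add, Polynomial.map_mul,
    Polynomial.map_pow, map_C, Polynomial.map_X, map_ofNat]
  norm_num

lemma QZ_map_two (u : ℕ) :
    (QZ u).map (Int.castRingHom (ZMod 2)) = X ^ (2*u+4) * (X + 1) ^ 5 := by
  have h : (2 : (ZMod 2)[X]) = 0 := by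
    have h0 : (2 : ZMod 2) = 0 := by decide
    rw [(map_ofNat C 2).symm, h0, map_zero]
  simp only [QZ, Polynomial.map_sub, Polynomial.map_add, Polynomial.map_mul,
    Polynomial.map_pow, map_C, Polynomial.map_X]
  have hC : (C ((Int.castRingHom (ZMod 2)) 2) : (ZMod 2)[X]) = 0 := by
    rw [show ((Int.castRingHom (ZMod 2)) 2) = 0 from by decide, map_zero]
  rw [hC]
  linear_combination (-3*X^(2*u+8) - 5*X^(2*u+7) - 5*X^(2*u+6) - 2*X^(2*u+5)
    - X^(2*u+4) : (ZMod 2)[X]) * h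

lemma cyclo4 : cyclotomic 4 ℚ = X^2 + 1 := by
  have h := cyclotomic_prime_pow_eq_geom_sum (R := ℚ) (n := 1) Nat.prime_two
  norm_num [Finset.sum_range_succ] at h
  rw [h]; ring

lemma cyclo8 : cyclotomic 8 ℚ = X^4 + 1 := by
  have h := cyclotomic_prime_pow_eq_geom_sum (R := ℚ) (n := 2) Nat.prime_two
  norm_num [Finset.sum_range_succ] at h
  rw [h]; ring

/-- For even `t ≥ 6`, `Q_t` is not divisible by any cyclotomic polynomial `Φ_b` with `b ≥ 3`. -/
theorem Qpoly_no_cyclotomic_dvd (t : ℕ) (ht : 6 ≤ t) (hte : Even t) :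
    ∀ b : ℕ, 3 ≤ b → ¬ cyclotomic b ℚ ∣ Qpoly t := by
  obtain ⟨u, rfl⟩ : ∃ u, t = 2*u+6 := ⟨(t-6)/2, by obtain ⟨c, hc⟩ := hte; omega⟩
  intro b hb hdvd
  have hZ : cyclotomic b ℤ ∣ QZ u := by
    rw [← map_dvd_map (Int.castRingHom ℚ) Int.cast_injective (cyclotomic.monic b ℤ)]
    rwa [map_cyclotomic, QZ_map_rat]
  have h2' : cyclotomic b (ZMod 2) ∣ X^(2*u+4) * (X+1)^5 := by
    have h := Polynomial.map_dvd (Int.castRingHom (ZMod 2)) hZ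
    rwa [map_cyclotomic, QZ_map_two] at h
  set P := cyclotomic b (ZMod 2) with hP
  have hc0 : P.coeff 0 = 1 := cyclotomic_coeff_zero _ (by omega)
  have hcop : IsCoprime P (X : (ZMod 2)[X]) := ⟨1, -P.divX, by
    have h := Polynomial.X_mul_divX_add P
    rw [hc0, Polynomial.C_1] at h
    linear_combination -h⟩
  have hdd : P ∣ (X+1 : (ZMod 2)[X])^5 := (hcop.pow_right).dvd_of_dvd_mul_left h2'
  have hXp : Prime (X + 1 : (ZMod 2)[X]) := by
    have hx : (X + 1 : (ZMod 2)[X]) = X - C 1 := by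
      have h1 : (C 1 : (ZMod 2)[X]) = -1 := by
        rw [show (1 : ZMod 2) = -1 by decide, map_neg, map_one]
      rw [h1, sub_neg_eq_add]
    rw [hx]
    exact prime_X_sub_C 1
  obtain ⟨i, hi5, hass⟩ := (dvd_prime_pow hXp 5).mp hdd
  rcases Nat.eq_zero_or_pos i with rfl | hipos
  · rw [pow_zero] at hass
    have hu : IsUnit P := hass.symm.isUnit isUnit_one
    have hdeg0 : P.natDegree = 0 := natDegree_eq_zero_of_isUnit hu
    have hdegP : P.natDegree = b.totient := natDegree_cyclotomic b (ZMod 2)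
    have : 0 < b.totient := Nat.totient_pos.mpr (by omega)
    omega
  · have hX1P : (X + 1 : (ZMod 2)[X]) ∣ P :=
      (dvd_pow_self _ (by omega : i ≠ 0)).trans hass.symm.dvd
    have heval : Polynomial.eval 1 P = 0 := by
      obtain ⟨c, hc⟩ := hX1P
      rw [hc, eval_mul, eval_add, eval_X, eval_one]
      rw [show (1 + 1 : ZMod 2) = 0 by decide, zero_mul]
    by_cases hpp : ∀ {p : ℕ}, p.Prime → ∀ k : ℕ, p ^ k ≠ b
    · have h1 := eval_one_cyclotomic_not_prime_pow (R := ZMod 2) hpp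
      rw [← hP] at h1
      rw [heval] at h1
      exact one_ne_zero h1.symm
    · push_neg at hpp
      obtain ⟨p, hp, k, hk⟩ := hpp
      have hk1 : k ≠ 0 := by rintro rfl; rw [pow_zero] at hk; omega
      obtain ⟨k', rfl⟩ : ∃ k', k = k' + 1 := ⟨k-1, by omega⟩
      subst hk
      haveI : Fact p.Prime := ⟨hp⟩
      have hev2 : Polynomial.eval 1 (cyclotomic (p^(k'+1)) (ZMod 2)) = p :=
        eval_one_cyclotomic_prime_pow k'
      rw [← hP, heval] at hev2
      have h2p : (2:ℕ) ∣ p := (ZMod.natCast_eq_zero_iff p 2).mp hev2.symm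
      have hp2 : p = 2 := ((Nat.prime_dvd_prime_iff_eq Nat.prime_two hp).mp h2p).symm
      subst hp2
      have hdeg : P.natDegree ≤ 5 := by
        have h5ne : ((X : (ZMod 2)[X])+1)^5 ≠ 0 := by
          apply pow_ne_zero
          have := monic_X_add_C (1 : ZMod 2)
          rw [Polynomial.C_1] at this
          exact this.ne_zero
        have h5d : (((X : (ZMod 2)[X])+1)^5).natDegree = 5 := by
          rw [natDegree_pow]
          rw [show ((X : (ZMod 2)[X]) + 1) = X + C 1 by rw [Polynomial.C_1], natDegree_X_add_C]
        have := Polynomial.natDegree_le_of_dvd hdd h5ne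
        omega
      rw [natDegree_cyclotomic, Nat.totient_prime_pow Nat.prime_two (Nat.succ_pos k')] at hdeg
      have hk'1 : 1 ≤ k' := by
        by_contra h
        push_neg at h
        interval_cases k' <;> simp_all
      have hk'2 : k' ≤ 2 := by
        by_contra h
        push_neg at h
        have h8 : (2:ℕ)^3 ≤ 2^k' := Nat.pow_le_pow_right (by norm_num) (by omega)
        norm_num at h8 hdeg
        omega
      interval_cases k'
      · exact not_dvd_four u (by rw [← cyclo4]; exact_mod_cast hdvd)
      · exact not_dvd_eight u (by rw [← cyclo8]; exact_mod_cast hdvd)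
end
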